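/- arXiv:2105.08890 — 4 statements merged into one kernel-verified Lean document; each statement's English description precedes it below -/
import Mathlib

section
/- Let f : V₀ → ℝ. For i = 1, 2 let Lᵢ be the horizontal line through (0, cᵢ, dᵢ) with direction (1, mᵢ, 0), and suppose Lᵢ ⊆ Γ_f and L₁ ≠ L₂. Let gᵢ(x) = dᵢ − cᵢ·x − (mᵢ/2)·x², so that Π(Lᵢ) = {(x, 0, gᵢ(x)) : x ∈ ℝ}. If d₁ < d₂, then g₁(x) ≤ g₂(x) for all x ∈ ℝ and m₁ ≥ m₂. -/
/-!
A point `(x, f(x, 0, z), z + x f(x, 0, z)/2)` of `Γ_f` lies on `Lᵢ` exactly when `z = gᵢ(x)`, and then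
`f(x, 0, gᵢ(x)) = cᵢ + mᵢ x = -gᵢ'(x)`. Hence wherever the quadratic `g₂ - g₁` vanishes, its derivative
vanishes too, so every zero is a double zero. Since `(g₂ - g₁)(0) = d₂ - d₁ > 0`, the intermediate value
theorem shows that `g₂ - g₁` cannot change sign, and a quadratic that is nonnegative everywhere and
positive at `0` has nonnegative leading coefficient `(m₁ - m₂)/2` (its discriminant is `≤ 0`).
-/

open MeasureTheory Filter

noncomputable section

/-- The Heisenberg group, identified with `ℝ³`. -/
abbrev H : Type := ℝ × ℝ × ℝ

/-- Heisenberg group multiplication. -/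
def Hmul (p q : H) : H :=
  (p.1 + q.1, p.2.1 + q.2.1, p.2.2 + q.2.2 + (p.1 * q.2.1 - p.2.1 * q.1) / 2)

/-- Heisenberg group inverse. -/
def Hinv (p : H) : H := (-p.1, -p.2.1, -p.2.2)

/-- The intrinsic projection `Π : ℍ → V₀`. -/
def Proj (p : H) : H := (p.1, 0, p.2.2 - p.1 * p.2.1 / 2)

/-- The `xz`-plane `V₀`. -/
def V0 : Set H := {p : H | p.2.1 = 0}

/-- The intrinsic graph of `f` over `D ⊆ V₀`. -/
def IGraph (D : Set H) (f : H → ℝ) : Set H :=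
  {q : H | ∃ x z : ℝ, ((x, (0 : ℝ), z) ∈ D) ∧
    q = (x, f (x, 0, z), z + x * f (x, 0, z) / 2)}

/-- The horizontal line through `p` with slope `m` (direction `(1, m, 0)`). -/
def horizLine (p : H) (m : ℝ) : Set H := {q : H | ∃ t : ℝ, q = Hmul p (t, t * m, 0)}

/-- The horizontal line through `p` with direction `(a, b, 0)`. -/
def horizLineGen (p : H) (a b : ℝ) : Set H := {q : H | ∃ t : ℝ, q = Hmul p (t * a, t * b, 0)}

/-- `Γ_f` is ruled: every point of `Γ_f` lies on a horizontal line contained in `Γ_f`. -/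
def IsRuled (S : Set H) : Prop :=
  ∀ p ∈ S, ∃ q : H, ∃ a b : ℝ, (a, b) ≠ ((0 : ℝ), (0 : ℝ)) ∧
    p ∈ horizLineGen q a b ∧ horizLineGen q a b ⊆ S

lemma apply_of_horizLine_subset_IGraph {D : Set H} {f : H → ℝ} {c d m : ℝ}
    (h : horizLine ((0 : ℝ), c, d) m ⊆ IGraph D f) (x : ℝ) :
    f (x, 0, d - c * x - m / 2 * x ^ 2) = c + x * m := by
  obtain ⟨x', z, -, hpt⟩ := h ⟨x, rfl⟩
  simp only [Hmul, Prod.mk.injEq] at hpt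
  obtain ⟨hx, hy, hz⟩ := hpt
  obtain rfl : x = x' := by linarith
  obtain rfl : z = d - c * x - m / 2 * x ^ 2 := by rw [← hy] at hz; linarith
  exact hy.symm

section Quadratic

variable {A B C : ℝ}

lemma quadratic_eq_mul_sq_of_double_root {r : ℝ} (hr : A + B * r + C * r ^ 2 = 0)
    (hr' : B + 2 * C * r = 0) (x : ℝ) : A + B * x + C * x ^ 2 = C * (x - r) ^ 2 := by
  linear_combination hr + (x - r) * hr'

lemma quadratic_nonneg_of_double_roots (hA : 0 < A)
    (hroots : ∀ r, A + B * r + C * r ^ 2 = 0 → B + 2 * C * r = 0) (x : ℝ) :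
    0 ≤ A + B * x + C * x ^ 2 := by
  by_contra! hx
  have hcont : Continuous fun y : ℝ => A + B * y + C * y ^ 2 := by fun_prop
  obtain ⟨r, -, hr⟩ := intermediate_value_uIcc (a := 0) (b := x) hcont.continuousOn
    (Set.mem_uIcc.mpr (Or.inr ⟨hx.le, by simpa using hA.le⟩))
  have hsq := quadratic_eq_mul_sq_of_double_root hr (hroots r hr)
  have hC : 0 < C := by nlinarith [hsq 0, sq_nonneg r]
  nlinarith [hsq x, mul_nonneg hC.le (sq_nonneg (x - r))]

lemma leadingCoeff_nonneg_of_quadratic_nonneg (hA : 0 < A)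
    (h : ∀ x, 0 ≤ A + B * x + C * x ^ 2) : 0 ≤ C := by
  have hdisc : discrim C B A ≤ 0 := discrim_le_zero fun x => by linarith [h x]
  rw [discrim] at hdisc
  nlinarith [sq_nonneg B]

end Quadratic

theorem monotone_slopes_general
    (f : H → ℝ) (c₁ c₂ d₁ d₂ m₁ m₂ : ℝ)
    (h₁ : horizLine ((0 : ℝ), c₁, d₁) m₁ ⊆ IGraph V0 f)
    (h₂ : horizLine ((0 : ℝ), c₂, d₂) m₂ ⊆ IGraph V0 f)
    (hd : d₁ < d₂) :
    (∀ x : ℝ, d₁ - c₁ * x - m₁ / 2 * x ^ 2 ≤ d₂ - c₂ * x - m₂ / 2 * x ^ 2) ∧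
      m₂ ≤ m₁ := by
  have hA : 0 < d₂ - d₁ := sub_pos.2 hd
  have hroots : ∀ x, (d₂ - d₁) + (c₁ - c₂) * x + (m₁ - m₂) / 2 * x ^ 2 = 0 →
      (c₁ - c₂) + 2 * ((m₁ - m₂) / 2) * x = 0 := by
    intro x hx
    have hg : d₁ - c₁ * x - m₁ / 2 * x ^ 2 = d₂ - c₂ * x - m₂ / 2 * x ^ 2 := by linarith
    have hslope := apply_of_horizLine_subset_IGraph h₁ x
    rw [hg, apply_of_horizLine_subset_IGraph h₂ x] at hslope
    linarith
  have hnonneg := quadratic_nonneg_of_double_roots hA hroots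
  refine ⟨fun x => by linarith [hnonneg x], ?_⟩
  linarith [leadingCoeff_nonneg_of_quadratic_nonneg hA hnonneg]

/-- monotonicity of rulings.  If `Lᵢ` is the horizontal line through
`(0, cᵢ, dᵢ)` with slope `mᵢ`, both contained in `Γ_f`, `L₁ ≠ L₂` and `d₁ < d₂`,
then `g₁ ≤ g₂` everywhere (where `gᵢ(x) = dᵢ − cᵢ x − (mᵢ/2) x²`) and `m₁ ≥ m₂`. -/
theorem monotone_slopes
    (f : H → ℝ) (c₁ c₂ d₁ d₂ m₁ m₂ : ℝ)
    (h₁ : horizLine ((0 : ℝ), c₁, d₁) m₁ ⊆ IGraph V0 f)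
    (h₂ : horizLine ((0 : ℝ), c₂, d₂) m₂ ⊆ IGraph V0 f)
    (hne : horizLine ((0 : ℝ), c₁, d₁) m₁ ≠ horizLine ((0 : ℝ), c₂, d₂) m₂)
    (hd : d₁ < d₂) :
    (∀ x : ℝ, d₁ - c₁ * x - m₁ / 2 * x ^ 2 ≤ d₂ - c₂ * x - m₂ / 2 * x ^ 2) ∧
      m₂ ≤ m₁ :=
  monotone_slopes_general f c₁ c₂ d₁ d₂ m₁ m₂ h₁ h₂ hd
end
end

section
/- Let f : V₀ → ℝ be continuous and suppose every point of Γ_f lies on a horizontal line contained in Γ_f. Let x₀ ≠ 0 and z₀ ∈ ℝ, and suppose there exist horizontal lines L₁, L₂ ⊆ Γ_f with slopes m₁ and m₂ respectively such that −(m₁/2)·x₀² < z₀ < −(m₂/2)·x₀². Then lim_{t→∞} f(t·x₀, 0, t²·z₀)/t = −2z₀/x₀. -/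
/-! A horizontal line of slope `m` in `Γ_f` projects under `Π` onto a parabola
`ζ(s) = A + B s - (m/2) s²` in `V₀` along which `f = -ζ'`. Two such parabolas that meet carry the
same value of `f` there, hence are tangent, so they never cross. The parabola of the ruling through
`(t x₀, 0, t² z₀)` therefore lies above that of the first given line and below that of the second;
each comparison bounds a squared difference of derivatives by a discriminant. Eliminating the
unknown curvature of the ruling parabola gives a quadratic inequality for `f(t x₀, 0, t² z₀)/t`
whose limit as `t → ∞` has a double root, at `-2 z₀ / x₀`. -/

open Filter Topology

noncomputable section

def parabola (A B M s : ℝ) : ℝ := A + B * s - M / 2 * s ^ 2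

/-- `ζ = parabola A B M` is a characteristic of `f`: `f(s, 0, ζ(s)) = -ζ'(s) = M s - B`. -/
def IsCharParabola (f : H → ℝ) (A B M : ℝ) : Prop :=
  ∀ s : ℝ, f (s, 0, parabola A B M s) = M * s - B

lemma apply_proj_of_mem_IGraph {D : Set H} {f : H → ℝ} {q : H} (h : q ∈ IGraph D f) :
    f (Proj q) = q.2.1 := by
  obtain ⟨x, z, -, rfl⟩ := h
  simp [Proj]

lemma proj_hmul_vertical (p : H) (y : ℝ) : Proj (Hmul p (0, y, 0)) = Proj p := by
  simp only [Proj, Hmul, Prod.mk.injEq]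
  refine ⟨by ring, trivial, by ring⟩

lemma eq_zero_of_hmul_vertical_mem_IGraph {D : Set H} {f : H → ℝ} {p : H} {y : ℝ}
    (hp : p ∈ IGraph D f) (hpy : Hmul p (0, y, 0) ∈ IGraph D f) : y = 0 := by
  have h := apply_proj_of_mem_IGraph hpy
  rw [proj_hmul_vertical, apply_proj_of_mem_IGraph hp] at h
  simpa [Hmul] using h

lemma fst_ne_zero_of_horizLineGen_subset_IGraph {D : Set H} {f : H → ℝ} {q : H} {a b : ℝ}
    (hab : (a, b) ≠ (0, 0)) (h : horizLineGen q a b ⊆ IGraph D f) : a ≠ 0 := by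
  rintro rfl
  have h₀ : q ∈ IGraph D f := h ⟨0, by simp [Hmul]⟩
  have hb : b = 0 := eq_zero_of_hmul_vertical_mem_IGraph h₀ (h ⟨1, by simp⟩)
  exact hab (by rw [hb])

lemma horizLineGen_eq_horizLine (q : H) {a : ℝ} (b : ℝ) (ha : a ≠ 0) :
    horizLineGen q a b = horizLine q (b / a) := by
  ext p
  constructor
  · rintro ⟨t, rfl⟩
    exact ⟨t * a, by field_simp⟩
  · rintro ⟨t, rfl⟩
    exact ⟨t / a, by field_simp⟩

lemma exists_proj_horizLine_eq_parabola (q : H) (m : ℝ) :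
    ∃ A B : ℝ, ∀ p ∈ horizLine q m,
      Proj p = (p.1, 0, parabola A B m p.1) ∧ p.2.1 = m * p.1 - B := by
  refine ⟨q.2.2 + q.1 * q.2.1 / 2 - m / 2 * q.1 ^ 2, m * q.1 - q.2.1, ?_⟩
  rintro p ⟨t, rfl⟩
  simp only [Proj, Hmul, parabola, Prod.mk.injEq]
  refine ⟨⟨trivial, trivial, by ring⟩, by ring⟩

lemma exists_isCharParabola_of_horizLine_subset {f : H → ℝ} {q : H} {m : ℝ}
    (h : horizLine q m ⊆ IGraph V0 f) :
    ∃ A B : ℝ, IsCharParabola f A B m ∧ ∀ p ∈ horizLine q m, (Proj p).2.2 = parabola A B m p.1 := by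
  obtain ⟨A, B, hproj⟩ := exists_proj_horizLine_eq_parabola q m
  refine ⟨A, B, fun s => ?_, fun p hp => by rw [(hproj p hp).1]⟩
  have hp : Hmul q (s - q.1, (s - q.1) * m, 0) ∈ horizLine q m := ⟨s - q.1, rfl⟩
  have hs : (Hmul q (s - q.1, (s - q.1) * m, 0)).1 = s := by simp [Hmul]
  obtain ⟨hpproj, hy⟩ := hproj _ hp
  rw [← apply_proj_of_mem_IGraph (h hp), hpproj, hs] at hy
  exact hy

lemma exists_isCharParabola_through {f : H → ℝ} (hruled : IsRuled (IGraph V0 f)) (x z : ℝ) :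
    ∃ A B M : ℝ, parabola A B M x = z ∧ IsCharParabola f A B M := by
  have hp : (x, f (x, 0, z), z + x * f (x, 0, z) / 2) ∈ IGraph V0 f := ⟨x, z, rfl, rfl⟩
  obtain ⟨q, a, b, hab, hpq, hsub⟩ := hruled _ hp
  rw [horizLineGen_eq_horizLine q b (fst_ne_zero_of_horizLineGen_subset_IGraph hab hsub)]
    at hpq hsub
  obtain ⟨A, B, hchar, hproj⟩ := exists_isCharParabola_of_horizLine_subset hsub
  refine ⟨A, B, b / a, ?_, hchar⟩
  have := hproj _ hpq
  simp only [Proj] at this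
  linarith

lemma parabola_sub_parabola_of_tangent {A B M A' B' M' c : ℝ}
    (hc : parabola A B M c = parabola A' B' M' c) (hc' : M * c - B = M' * c - B') (s : ℝ) :
    parabola A' B' M' s - parabola A B M s = (M - M') / 2 * (s - c) ^ 2 := by
  unfold parabola at *
  linear_combination -hc + (s - c) * hc'

lemma IsCharParabola.parabola_le_of_lt {f : H → ℝ} {A B M A' B' M' s₀ : ℝ}
    (h : IsCharParabola f A B M) (h' : IsCharParabola f A' B' M')
    (hs₀ : parabola A B M s₀ < parabola A' B' M' s₀) (s : ℝ) :
    parabola A B M s ≤ parabola A' B' M' s := by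
  by_contra! hs
  let d : ℝ → ℝ := fun s => parabola A' B' M' s - parabola A B M s
  have hd : ContinuousOn d (Set.uIcc s₀ s) := by unfold d parabola; fun_prop
  obtain ⟨c, -, hc⟩ : ∃ c ∈ Set.uIcc s₀ s, d c = 0 :=
    intermediate_value_uIcc hd (Set.mem_uIcc.mpr (Or.inr ⟨by simp [d]; linarith,
      by simp [d]; linarith⟩))
  have hcross : parabola A B M c = parabola A' B' M' c := by simp only [d] at hc; linarith
  have htangent : M * c - B = M' * c - B' := by rw [← h c, ← h' c, hcross]
  have e := parabola_sub_parabola_of_tangent hcross htangent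
  rcases le_total 0 (M - M') with hM | hM
  · have := e s
    nlinarith [mul_nonneg hM (sq_nonneg (s - c))]
  · have := e s₀
    nlinarith [mul_nonneg (neg_nonneg.mpr hM) (sq_nonneg (s₀ - c))]

lemma sq_slope_sub_le_of_parabola_le {A B M A' B' M' : ℝ}
    (h : ∀ s, parabola A B M s ≤ parabola A' B' M' s) (x : ℝ) :
    ((M * x - B) - (M' * x - B')) ^ 2
      ≤ 2 * (M - M') * (parabola A' B' M' x - parabola A B M x) := by
  have hq : ∀ u : ℝ, 0 ≤ (M - M') / 2 * (u * u) + ((M * x - B) - (M' * x - B')) * u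
      + (parabola A' B' M' x - parabola A B M x) := by
    intro u
    have := h (x + u)
    unfold parabola at *
    linarith
  have := discrim_le_zero hq
  unfold discrim at this
  linarith

lemma wedge_ineq {f : H → ℝ} (hruled : IsRuled (IGraph V0 f)) {A₁ B₁ m₁ A₂ B₂ m₂ x z : ℝ}
    (h₁ : IsCharParabola f A₁ B₁ m₁) (h₂ : IsCharParabola f A₂ B₂ m₂)
    (hz₁ : parabola A₁ B₁ m₁ x < z) (hz₂ : z < parabola A₂ B₂ m₂ x) :
    (parabola A₂ B₂ m₂ x - z) * (f (x, 0, z) - (m₁ * x - B₁)) ^ 2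
      + (z - parabola A₁ B₁ m₁ x) * (f (x, 0, z) - (m₂ * x - B₂)) ^ 2
      ≤ 2 * (m₁ - m₂) * (z - parabola A₁ B₁ m₁ x) * (parabola A₂ B₂ m₂ x - z) := by
  obtain ⟨A, B, M, hx, h⟩ := exists_isCharParabola_through hruled x z
  have hv : f (x, 0, z) = M * x - B := by rw [← hx]; exact h x
  have e₁ := sq_slope_sub_le_of_parabola_le (h₁.parabola_le_of_lt h (hx ▸ hz₁)) x
  have e₂ := sq_slope_sub_le_of_parabola_le (h.parabola_le_of_lt h₂ (hx ▸ hz₂)) x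
  rw [hx] at e₁ e₂
  rw [hv]
  linear_combination mul_le_mul_of_nonneg_left e₁ (sub_nonneg.mpr hz₂.le)
    + mul_le_mul_of_nonneg_left e₂ (sub_nonneg.mpr hz₁.le)

lemma tendsto_of_quadratic_nonpos {ι : Type*} {l : Filter ι} {a b c w : ι → ℝ} {α β γ : ℝ}
    (ha : Tendsto a l (𝓝 α)) (hb : Tendsto b l (𝓝 β)) (hc : Tendsto c l (𝓝 γ))
    (hα : 0 < α) (hdisc : discrim α β γ = 0)
    (hw : ∀ᶠ i in l, a i * (w i * w i) + b i * w i + c i ≤ 0) :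
    Tendsto w l (𝓝 (-β / (2 * α))) := by
  have ha_pos : ∀ᶠ i in l, 0 < a i := ha.eventually_const_lt hα
  have hdisc_lim : Tendsto (fun i => discrim (a i) (b i) (c i)) l (𝓝 0) := by
    rw [← hdisc]
    exact (hb.pow 2).sub ((ha.const_mul 4).mul hc)
  -- `(2 a w + b)² = discrim a b c + 4 a (a w² + b w + c)`
  have hsq : Tendsto (fun i => (2 * a i * w i + b i) ^ 2) l (𝓝 0) := by
    refine squeeze_zero' (Eventually.of_forall fun i => sq_nonneg _) ?_ hdisc_lim
    filter_upwards [ha_pos, hw] with i hai hwi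
    unfold discrim
    linear_combination 4 * mul_nonpos_of_nonneg_of_nonpos hai.le hwi
  have hlin : Tendsto (fun i => 2 * a i * w i + b i) l (𝓝 0) := by
    have habs := hsq.sqrt
    simp only [Real.sqrt_sq_eq_abs, Real.sqrt_zero] at habs
    exact (tendsto_zero_iff_abs_tendsto_zero _).mpr habs
  have hlim := (hlin.sub hb).div (ha.const_mul 2) (by positivity)
  rw [zero_sub] at hlim
  refine hlim.congr' ?_
  filter_upwards [ha_pos] with i hai
  simp only [Pi.div_apply]
  field_simp
  ring

lemma tendsto_of_weighted_sq_le {ι : Type*} {l : Filter ι} {a₁ a₂ p₁ p₂ w : ι → ℝ}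
    {c₁ c₂ π₁ π₂ k : ℝ} (ha₁ : Tendsto a₁ l (𝓝 c₁)) (ha₂ : Tendsto a₂ l (𝓝 c₂))
    (hp₁ : Tendsto p₁ l (𝓝 π₁)) (hp₂ : Tendsto p₂ l (𝓝 π₂)) (hc₁ : 0 < c₁) (hc₂ : 0 < c₂)
    (hk : (π₁ - π₂) ^ 2 = 2 * k * (c₁ + c₂))
    (hw : ∀ᶠ i in l, a₂ i * (w i - p₁ i) ^ 2 + a₁ i * (w i - p₂ i) ^ 2 ≤ 2 * k * a₁ i * a₂ i) :
    Tendsto w l (𝓝 ((c₂ * π₁ + c₁ * π₂) / (c₁ + c₂))) := by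
  have h := tendsto_of_quadratic_nonpos (w := w) (ha₁.add ha₂)
    (((ha₂.mul hp₁).add (ha₁.mul hp₂)).const_mul (-2))
    (((ha₂.mul (hp₁.pow 2)).add (ha₁.mul (hp₂.pow 2))).sub (((ha₁.const_mul (2 * k)).mul ha₂)))
    (add_pos hc₁ hc₂) ?_ (hw.mono fun i hi => by linarith)
  · convert h using 2
    field_simp
  · unfold discrim
    linear_combination (-4 * c₁ * c₂) * hk

lemma tendsto_parabola_div_sq (A B M x₀ : ℝ) :
    Tendsto (fun t => parabola A B M (t * x₀) / t ^ 2) atTop (𝓝 (-(M / 2) * x₀ ^ 2)) := by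
  have hinv := tendsto_inv_atTop_zero (𝕜 := ℝ)
  have h := (((hinv.pow 2).const_mul A).add (hinv.const_mul (B * x₀))).sub_const (M / 2 * x₀ ^ 2)
  rw [show A * 0 ^ 2 + B * x₀ * 0 - M / 2 * x₀ ^ 2 = -(M / 2) * x₀ ^ 2 by ring] at h
  refine h.congr' ?_
  filter_upwards [eventually_ne_atTop 0] with t ht
  unfold parabola
  field_simp

lemma tendsto_slope_div (B M x₀ : ℝ) :
    Tendsto (fun t => (M * (t * x₀) - B) / t) atTop (𝓝 (M * x₀)) := by
  have h := tendsto_const_nhds (x := M * x₀) |>.sub ((tendsto_inv_atTop_zero (𝕜 := ℝ)).const_mul B)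
  rw [mul_zero, sub_zero] at h
  refine h.congr' ?_
  filter_upwards [eventually_ne_atTop 0] with t ht
  field_simp

lemma eventually_wedge_ineq_div_sq {f : H → ℝ} (hruled : IsRuled (IGraph V0 f))
    {A₁ B₁ m₁ A₂ B₂ m₂ x₀ z₀ : ℝ} (h₁ : IsCharParabola f A₁ B₁ m₁)
    (h₂ : IsCharParabola f A₂ B₂ m₂)
    (hz₁ : -(m₁ / 2) * x₀ ^ 2 < z₀) (hz₂ : z₀ < -(m₂ / 2) * x₀ ^ 2) :
    ∀ᶠ t in atTop,
      (parabola A₂ B₂ m₂ (t * x₀) / t ^ 2 - z₀) * (f (t * x₀, 0, t ^ 2 * z₀) / t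
          - (m₁ * (t * x₀) - B₁) / t) ^ 2
        + (z₀ - parabola A₁ B₁ m₁ (t * x₀) / t ^ 2) * (f (t * x₀, 0, t ^ 2 * z₀) / t
          - (m₂ * (t * x₀) - B₂) / t) ^ 2
      ≤ 2 * (m₁ - m₂) * (z₀ - parabola A₁ B₁ m₁ (t * x₀) / t ^ 2)
          * (parabola A₂ B₂ m₂ (t * x₀) / t ^ 2 - z₀) := by
  filter_upwards [eventually_gt_atTop 0,
    ((tendsto_parabola_div_sq A₁ B₁ m₁ x₀).const_sub z₀).eventually_const_lt (sub_pos.mpr hz₁),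
    ((tendsto_parabola_div_sq A₂ B₂ m₂ x₀).sub_const z₀).eventually_const_lt (sub_pos.mpr hz₂)]
    with t ht hgap₁ hgap₂
  have ht2 : 0 < t ^ 2 := by positivity
  rw [sub_pos, div_lt_iff₀' ht2] at hgap₁
  rw [sub_pos, lt_div_iff₀' ht2] at hgap₂
  have key := wedge_ineq hruled h₁ h₂ hgap₁ hgap₂
  refine (Eq.le ?_).trans ((div_le_div_of_nonneg_right key (pow_pos ht 4).le).trans (Eq.le ?_))
  all_goals field_simp

theorem scaling_limit_wedge_general
    (f : H → ℝ)
    (hruled : IsRuled (IGraph V0 f))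
    (x₀ z₀ : ℝ)
    (m₁ m₂ : ℝ) (p₁ p₂ : H)
    (h₁ : horizLine p₁ m₁ ⊆ IGraph V0 f)
    (h₂ : horizLine p₂ m₂ ⊆ IGraph V0 f)
    (hz₁ : -(m₁ / 2) * x₀ ^ 2 < z₀) (hz₂ : z₀ < -(m₂ / 2) * x₀ ^ 2) :
    Tendsto (fun t : ℝ => f (t * x₀, 0, t ^ 2 * z₀) / t) atTop
      (nhds (-2 * z₀ / x₀)) := by
  obtain ⟨A₁, B₁, hζ₁, -⟩ := exists_isCharParabola_of_horizLine_subset h₁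
  obtain ⟨A₂, B₂, hζ₂, -⟩ := exists_isCharParabola_of_horizLine_subset h₂
  have hc₁ := sub_pos.mpr hz₁
  have hc₂ := sub_pos.mpr hz₂
  have hx₀ : x₀ ≠ 0 := by
    rintro rfl
    norm_num at hz₁ hz₂
    linarith
  have hlim := tendsto_of_weighted_sq_le
    ((tendsto_parabola_div_sq A₁ B₁ m₁ x₀).const_sub z₀)
    ((tendsto_parabola_div_sq A₂ B₂ m₂ x₀).sub_const z₀)
    (tendsto_slope_div B₁ m₁ x₀) (tendsto_slope_div B₂ m₂ x₀) hc₁ hc₂ (k := m₁ - m₂) (by ring)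
    (eventually_wedge_ineq_div_sq hruled hζ₁ hζ₂ hz₁ hz₂)
  convert hlim using 2
  rw [div_eq_div_iff hx₀ (add_pos hc₁ hc₂).ne']
  ring

/-- scaling limit of a ruled entire intrinsic graph in the wedge
region.  If `Γ_f` contains rulings of slopes `m₁` and `m₂` with
`−(m₁/2)x₀² < z₀ < −(m₂/2)x₀²` and `x₀ ≠ 0`, then
`f(t x₀, 0, t² z₀)/t → −2z₀/x₀` as `t → ∞`. -/
theorem scaling_limit_wedge
    (f : H → ℝ) (hf : ContinuousOn f V0)
    (hruled : IsRuled (IGraph V0 f))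
    (x₀ z₀ : ℝ) (hx₀ : x₀ ≠ 0)
    (m₁ m₂ : ℝ) (p₁ p₂ : H)
    (h₁ : horizLine p₁ m₁ ⊆ IGraph V0 f)
    (h₂ : horizLine p₂ m₂ ⊆ IGraph V0 f)
    (hz₁ : -(m₁ / 2) * x₀ ^ 2 < z₀) (hz₂ : z₀ < -(m₂ / 2) * x₀ ^ 2) :
    Tendsto (fun t : ℝ => f (t * x₀, 0, t ^ 2 * z₀) / t) atTop
      (nhds (-2 * z₀ / x₀)) :=
  scaling_limit_wedge_general f hruled x₀ z₀ m₁ m₂ p₁ p₂ h₁ h₂ hz₁ hz₂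
end
end

section
/- Let m ∈ ℝ and let f : V₀ → ℝ be such that every point of Γ_f lies on a horizontal line of slope m (i.e., with direction (1, m, 0)) contained in Γ_f. Then there exists c ∈ ℝ such that f(x, 0, z) = m·x + c for all x, z ∈ ℝ; equivalently, Γ_f is the vertical plane {(x, m·x + c, z) : x, z ∈ ℝ}. -/
open MeasureTheory Filter

noncomputable section

/-!
A horizontal line of slope `m` is a coset of the one-parameter subgroup `t ↦ (t, t m, 0)`, so if
`Γ_f` is ruled by such lines it is invariant under right translation by that subgroup. In
coordinates this reads `f(x + t, 0, z - t f(x,0,z) - t² m / 2) = f(x,0,z) + t m`. Starting from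
two points `(0,0,z₁)`, `(0,0,z₂)` with different values of `f`, one value of `t` sends both to the
same point while keeping the values of `f` different, which is absurd; hence `f` is constant on
the `z`-axis, and translating from the axis gives `f(x,0,z) = m x + f(0,0,0)`.
-/

def IsRuledBySlope (S : Set H) (m : ℝ) : Prop :=
  ∀ p ∈ S, ∃ q : H, p ∈ horizLine q m ∧ horizLine q m ⊆ S

lemma Hmul_horizontal_add (q : H) (m s t : ℝ) :
    Hmul (Hmul q (s, s * m, 0)) (t, t * m, 0) = Hmul q (s + t, (s + t) * m, 0) := by
  simp only [Hmul, Prod.mk.injEq]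
  refine ⟨by ring, by ring, by ring⟩

lemma Hmul_mem_horizLine {p q : H} {m : ℝ} (hp : p ∈ horizLine q m) (t : ℝ) :
    Hmul p (t, t * m, 0) ∈ horizLine q m := by
  obtain ⟨s, rfl⟩ := hp
  exact ⟨s + t, Hmul_horizontal_add q m s t⟩

lemma IsRuledBySlope.Hmul_mem {S : Set H} {m : ℝ} (hS : IsRuledBySlope S m) {p : H}
    (hp : p ∈ S) (t : ℝ) : Hmul p (t, t * m, 0) ∈ S := by
  obtain ⟨q, hpq, hqS⟩ := hS p hp
  exact hqS (Hmul_mem_horizLine hpq t)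

lemma mem_IGraph_V0_iff (f : H → ℝ) (p : H) : p ∈ IGraph V0 f ↔ p.2.1 = f (Proj p) := by
  constructor
  · rintro ⟨x, z, -, rfl⟩
    simp only [Proj, add_sub_cancel_right]
  · intro h
    refine ⟨p.1, p.2.2 - p.1 * p.2.1 / 2, rfl, ?_⟩
    rw [← Proj, ← h, sub_add_cancel]

lemma graph_point_mem_IGraph_V0 (f : H → ℝ) (x z : ℝ) :
    ((x, f (x, 0, z), z + x * f (x, 0, z) / 2) : H) ∈ IGraph V0 f :=
  ⟨x, z, rfl, rfl⟩

lemma apply_translate_of_isRuledBySlope {m : ℝ} {f : H → ℝ} (hf : IsRuledBySlope (IGraph V0 f) m)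
    (x z t : ℝ) :
    f (x + t, 0, z - t * f (x, 0, z) - t ^ 2 * m / 2) = f (x, 0, z) + t * m := by
  have h := (mem_IGraph_V0_iff f _).1 (hf.Hmul_mem (graph_point_mem_IGraph_V0 f x z) t)
  simp only [Hmul, Proj] at h
  rw [h]
  congr 3
  ring

lemma apply_zero_zero_eq_of_isRuledBySlope {m : ℝ} {f : H → ℝ}
    (hf : IsRuledBySlope (IGraph V0 f) m) (z₁ z₂ : ℝ) : f (0, 0, z₁) = f (0, 0, z₂) := by
  by_contra hne
  have hsub : f (0, 0, z₂) - f (0, 0, z₁) ≠ 0 := sub_ne_zero.2 (Ne.symm hne)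
  -- at this parameter the lines of slope `m` through the two axis points reach the same point of `V₀`
  set t := (z₂ - z₁) / (f (0, 0, z₂) - f (0, 0, z₁))
  have hmeet : z₁ - t * f (0, 0, z₁) - t ^ 2 * m / 2 = z₂ - t * f (0, 0, z₂) - t ^ 2 * m / 2 := by
    have : t * (f (0, 0, z₂) - f (0, 0, z₁)) = z₂ - z₁ := div_mul_cancel₀ _ hsub
    linarith
  have h₁ := apply_translate_of_isRuledBySlope hf 0 z₁ t
  have h₂ := apply_translate_of_isRuledBySlope hf 0 z₂ t
  rw [hmeet, h₂] at h₁
  exact hne (add_right_cancel h₁).symm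

lemma apply_eq_of_isRuledBySlope {m : ℝ} {f : H → ℝ} (hf : IsRuledBySlope (IGraph V0 f) m)
    (x z : ℝ) : f (x, 0, z) = m * x + f (0, 0, 0) := by
  set z₀ := z + x * f (0, 0, 0) + x ^ 2 * m / 2
  have h := apply_translate_of_isRuledBySlope hf 0 z₀ x
  have hz : z₀ - x * f (0, 0, 0) - x ^ 2 * m / 2 = z := by ring
  rw [apply_zero_zero_eq_of_isRuledBySlope hf z₀ 0, zero_add, hz] at h
  rw [h, add_comm, mul_comm]

/-- if every point of `Γ_f` lies on a horizontal line of slope `m`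
contained in `Γ_f`, then `Γ_f` is a vertical plane: `f(x,0,z) = m x + c`. -/
theorem constant_slope_implies_plane
    (m : ℝ) (f : H → ℝ)
    (hruled : ∀ p ∈ IGraph V0 f, ∃ q : H,
      p ∈ horizLine q m ∧ horizLine q m ⊆ IGraph V0 f) :
    ∃ c : ℝ, (∀ x z : ℝ, f (x, 0, z) = m * x + c) ∧
      IGraph V0 f = {p : H | p.2.1 = m * p.1 + c} := by
  have hlinear := apply_eq_of_isRuledBySlope (show IsRuledBySlope (IGraph V0 f) m from hruled)
  refine ⟨f (0, 0, 0), hlinear, Set.ext fun p => ?_⟩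
  rw [mem_IGraph_V0_iff, Proj, hlinear]
  rfl
end
end

section
/- Let a₁ < a₂ and b₁ < b₂ be real numbers. For i = 1, 2 let Rᵢ = {(1−s)·(−1, 2aᵢ, aᵢ) + s·(1, −2bᵢ, bᵢ) : s ∈ (0,1)} be the open Euclidean segment from (−1, 2aᵢ, aᵢ) to (1, −2bᵢ, bᵢ) in ℝ³ (each Rᵢ is a horizontal segment, since (−1, 2aᵢ, aᵢ)⁻¹·(1, −2bᵢ, bᵢ) = (2, −2aᵢ − 2bᵢ, 0)). Then for every p ∈ R₁ and q ∈ R₂, the z-coordinate of p⁻¹·q is nonzero. In particular, no horizontal line meets both R₁ and R₂, and R₁ ∩ R₂ = ∅. -/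
/-!
The quantity `ω p q := (p⁻¹ q).z = q.z - p.z + (p.y q.x - p.x q.y) / 2` is affine in each
argument, so on two segments `[P, Q]`, `[P', Q']` it is the bilinear interpolation of its four
values at the endpoints. For the rulings `[(−1, 2a, a), (1, −2b, b)]` the two mixed endpoint
pairs are horizontally joined (`ω = 0`), while `ω` between the left endpoints is `2 (a₂ − a₁)`
and between the right endpoints `2 (b₂ − b₁)`. Hence on `R₁ × R₂`,
`ω = 2 ((1 − s)(1 − t)(a₂ − a₁) + s t (b₂ − b₁)) > 0`.
-/

open MeasureTheory Filter

noncomputable section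

theorem Hmul_Hinv_snd_snd (p q : H) :
    (Hmul (Hinv p) q).2.2 = q.2.2 - p.2.2 + (p.2.1 * q.1 - p.1 * q.2.1) / 2 := by
  simp only [Hmul, Hinv]
  ring

theorem Hmul_Hinv_self_snd_snd (p : H) : (Hmul (Hinv p) p).2.2 = 0 := by
  rw [Hmul_Hinv_snd_snd]
  ring

theorem Hmul_Hinv_snd_snd_segment (P Q P' Q' : H) (s t : ℝ) :
    (Hmul (Hinv ((1 - s) • P + s • Q)) ((1 - t) • P' + t • Q')).2.2 =
      (1 - s) * (1 - t) * (Hmul (Hinv P) P').2.2 + (1 - s) * t * (Hmul (Hinv P) Q').2.2 +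
        s * (1 - t) * (Hmul (Hinv Q) P').2.2 + s * t * (Hmul (Hinv Q) Q').2.2 := by
  simp only [Hmul_Hinv_snd_snd, Prod.fst_add, Prod.snd_add, Prod.smul_fst, Prod.smul_snd,
    smul_eq_mul]
  ring

theorem Hmul_Hinv_snd_snd_ruling (a₁ a₂ b₁ b₂ s t : ℝ) :
    (Hmul (Hinv ((1 - s) • ((-1, 2 * a₁, a₁) : H) + s • ((1, -2 * b₁, b₁) : H)))
        ((1 - t) • ((-1, 2 * a₂, a₂) : H) + t • ((1, -2 * b₂, b₂) : H))).2.2 =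
      2 * ((1 - s) * (1 - t) * (a₂ - a₁) + s * t * (b₂ - b₁)) := by
  rw [Hmul_Hinv_snd_snd_segment]
  simp only [Hmul_Hinv_snd_snd]
  ring

/-- for `a₁ < a₂` and `b₁ < b₂`, let `Rᵢ` be the open segment from
`(−1, 2aᵢ, aᵢ)` to `(1, −2bᵢ, bᵢ)`.  Then for all `p ∈ R₁`, `q ∈ R₂` the
`z`-coordinate of `p⁻¹q` is nonzero; in particular `R₁ ∩ R₂ = ∅`. -/
theorem no_horizontal_line_between_rulings
    (a₁ a₂ b₁ b₂ : ℝ) (ha : a₁ < a₂) (hb : b₁ < b₂)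
    (R₁ R₂ : Set H)
    (hR₁ : R₁ = {p : H | ∃ s ∈ Set.Ioo (0 : ℝ) 1,
      p = (1 - s) • ((-1, 2 * a₁, a₁) : H) + s • ((1, -2 * b₁, b₁) : H)})
    (hR₂ : R₂ = {p : H | ∃ s ∈ Set.Ioo (0 : ℝ) 1,
      p = (1 - s) • ((-1, 2 * a₂, a₂) : H) + s • ((1, -2 * b₂, b₂) : H)}) :
    (∀ p ∈ R₁, ∀ q ∈ R₂, (Hmul (Hinv p) q).2.2 ≠ 0) ∧ R₁ ∩ R₂ = ∅ := by
  have not_horizontal : ∀ p ∈ R₁, ∀ q ∈ R₂, (Hmul (Hinv p) q).2.2 ≠ 0 := by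
    rintro p hp q hq
    rw [hR₁] at hp
    rw [hR₂] at hq
    obtain ⟨s, ⟨hs₀, hs₁⟩, rfl⟩ := hp
    obtain ⟨t, ⟨ht₀, ht₁⟩, rfl⟩ := hq
    rw [Hmul_Hinv_snd_snd_ruling]
    have hleft : 0 < (1 - s) * (1 - t) * (a₂ - a₁) :=
      mul_pos (mul_pos (sub_pos.2 hs₁) (sub_pos.2 ht₁)) (sub_pos.2 ha)
    have hright : 0 < s * t * (b₂ - b₁) := mul_pos (mul_pos hs₀ ht₀) (sub_pos.2 hb)
    exact (mul_pos two_pos (add_pos hleft hright)).ne'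
  refine ⟨not_horizontal, Set.eq_empty_of_forall_notMem fun p ⟨hp₁, hp₂⟩ => ?_⟩
  exact not_horizontal p hp₁ p hp₂ (Hmul_Hinv_self_snd_snd p)
end
end
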